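/- arXiv:2305.15939 — 4 statements merged into one kernel-verified Lean document; each statement's English description precedes it below -/
import Mathlib

section
/- Let A = [[0,1,0],[−1,0,−1],[0,1,0]] and let T = 7π/(4√2). Then exp(T·A) applied to the vector (1/2, −1/√2, 1/2) equals (1/√2, 0, 1/√2). -/
/-!
On the plane spanned by `v = (1/2, -1/√2, 1/2)` and `w = (1/2, 1/√2, 1/2)` the matrix `A` acts as
`√2` times a rotation generator: `A v = -√2 w` and `A w = √2 v`. Splitting the exponential series
into even and odd powers and comparing with the series of `cos` and `sin` gives
`exp (t A) v = cos (√2 t) v - sin (√2 t) w`; at `√2 t = 7π/4` this is `(v + w) / √2 = (1/√2, 0, 1/√2)`.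
-/

open Matrix Real

section

variable {n : Type*} [Fintype n] [DecidableEq n]

theorem Matrix.pow_mulVec_of_mulVec_eq_smul {R : Type*} [CommRing R] {M : Matrix n n R}
    {v : n → R} {c : R} (h : M *ᵥ v = c • v) (k : ℕ) : (M ^ k) *ᵥ v = c ^ k • v := by
  induction k with
  | zero => simp
  | succ k ih => rw [pow_succ, ← mulVec_mulVec, h, mulVec_smul, ih, smul_smul, pow_succ']

attribute [local instance] Matrix.linftyOpNormedRing Matrix.linftyOpNormedAlgebra

theorem Matrix.hasSum_exp_mulVec (M : Matrix n n ℝ) (v : n → ℝ) :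
    HasSum (fun k : ℕ => (k.factorial⁻¹ : ℝ) • (M ^ k *ᵥ v)) (NormedSpace.exp M *ᵥ v) :=
  ((NormedSpace.exp_series_hasSum_exp' (𝕂 := ℝ) M).map (mulVec.addMonoidHomLeft v)
    (continuous_id.matrix_mulVec continuous_const)).congr_fun fun _ => (smul_mulVec _ _ _).symm

theorem Matrix.exp_mulVec_of_rotation {M : Matrix n n ℝ} {v w : n → ℝ} {θ : ℝ}
    (hv : M *ᵥ v = -θ • w) (hw : M *ᵥ w = θ • v) :
    NormedSpace.exp M *ᵥ v = cos θ • v - sin θ • w := by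
  have hsq : (M ^ 2) *ᵥ v = (-θ ^ 2) • v := by
    rw [sq, ← mulVec_mulVec, hv, mulVec_smul, hw, smul_smul]; ring_nf
  have hpow (k : ℕ) : (M ^ (2 * k)) *ᵥ v = (-θ ^ 2) ^ k • v := by
    rw [pow_mul, pow_mulVec_of_mulVec_eq_smul hsq]
  have heven : HasSum (fun k : ℕ => ((2 * k).factorial⁻¹ : ℝ) • (M ^ (2 * k) *ᵥ v))
      (cos θ • v) := by
    refine ((Real.hasSum_cos θ).smul_const v).congr_fun fun k => ?_
    rw [hpow, smul_smul, neg_pow, ← pow_mul]; ring_nf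
  have hodd : HasSum (fun k : ℕ => ((2 * k + 1).factorial⁻¹ : ℝ) • (M ^ (2 * k + 1) *ᵥ v))
      (-(sin θ • w)) := by
    refine ((Real.hasSum_sin θ).smul_const w).neg.congr_fun fun k => ?_
    rw [pow_succ', ← mulVec_mulVec, hpow, mulVec_smul, hv, smul_smul, smul_smul, neg_pow,
      ← pow_mul, ← neg_smul]; ring_nf
  rw [sub_eq_add_neg]
  exact (hasSum_exp_mulVec M v).unique (heven.even_add_odd hodd)

end

theorem first_move :
    (NormedSpace.exp ((7 * Real.pi / (4 * Real.sqrt 2)) •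
        (!![0, 1, 0; -1, 0, -1; 0, 1, 0] : Matrix (Fin 3) (Fin 3) ℝ))).mulVec
      ![1/2, -(1 / Real.sqrt 2), 1/2] = ![1 / Real.sqrt 2, 0, 1 / Real.sqrt 2] := by
  set t := 7 * π / (4 * √2)
  set A : Matrix (Fin 3) (Fin 3) ℝ := !![0, 1, 0; -1, 0, -1; 0, 1, 0]
  set v : Fin 3 → ℝ := ![1/2, -(1 / √2), 1/2]
  set w : Fin 3 → ℝ := ![1/2, 1 / √2, 1/2]
  have hs : √2 * √2 = 2 := mul_self_sqrt zero_le_two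
  have hAv : A *ᵥ v = -√2 • w := by
    ext i; fin_cases i <;> simp [A, v, w] <;> field_simp <;> linarith
  have hAw : A *ᵥ w = √2 • v := by
    ext i; fin_cases i <;> simp [A, v, w] <;> field_simp <;> linarith
  have hv : (t • A) *ᵥ v = -(t * √2) • w := by rw [smul_mulVec, hAv, smul_smul, mul_neg]
  have hw : (t • A) *ᵥ w = (t * √2) • v := by rw [smul_mulVec, hAw, smul_smul]
  have hθ : t * √2 = -(π / 4) + 2 * π := by simp only [t]; field_simp; ring
  rw [exp_mulVec_of_rotation hv hw, hθ, cos_add_two_pi, sin_add_two_pi, cos_neg, sin_neg,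
    cos_pi_div_four, sin_pi_div_four]
  ext i; fin_cases i <;> simp [v, w] <;> field_simp <;> linarith
end

section
/- Let A = [[0,1,0],[−1,0,−1],[0,1,0]] and let T = π/(2√2). Then exp(T·A) applied to the vector (0, 1, 0) equals (1/√2, 0, 1/√2). -/
/-!
If `B *ᵥ (B *ᵥ v) = -θ ^ 2 • v`, then `B` acts on the plane spanned by `v` and `B *ᵥ v` as `θ`
times a rotation generator: the even terms of the exponential series applied to `v` sum to
`cos θ • v` and the odd ones to `(sin θ / θ) • (B *ᵥ v)`. For `B = T • A` and `v = (0, 1, 0)` one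
has `B *ᵥ v = T • (1, 0, 1)` and `θ = √2 T = π / 2`, so `exp B *ᵥ v = (2 / π) T • (1, 0, 1)`.
-/

open Matrix Real

open scoped Nat

namespace Matrix

variable {n : Type*} [Fintype n] [DecidableEq n]

theorem hasSum_exp_mulVec_s6 {𝕂 : Type*} [RCLike 𝕂] (A : Matrix n n 𝕂) (v : n → 𝕂) :
    HasSum (fun k => (k !⁻¹ : 𝕂) • (A ^ k *ᵥ v)) (NormedSpace.exp A *ᵥ v) := by
  -- Any matrix norm makes the exponential series converge; `exp` itself does not depend on it.
  open scoped Norms.Operator in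
  have hA := (NormedSpace.exp_series_hasSum_exp' (𝕂 := 𝕂) A).map (mulVec.addMonoidHomLeft v)
    (continuous_id.matrix_mulVec continuous_const)
  exact hA.congr_fun fun k => (smul_mulVec _ _ _).symm

section Powers

variable {R : Type*} [CommSemiring R] {A : Matrix n n R} {v : n → R} {c : R}

theorem pow_even_mulVec_of_mulVec_mulVec_eq_smul (h : A *ᵥ (A *ᵥ v) = c • v) (k : ℕ) :
    A ^ (2 * k) *ᵥ v = c ^ k • v := by
  induction k with
  | zero => simp
  | succ k ih =>
    rw [mul_add, mul_one, pow_add, ← mulVec_mulVec, sq, ← mulVec_mulVec, h, mulVec_smul, ih,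
      smul_smul, pow_succ']

theorem pow_odd_mulVec_of_mulVec_mulVec_eq_smul (h : A *ᵥ (A *ᵥ v) = c • v) (k : ℕ) :
    A ^ (2 * k + 1) *ᵥ v = c ^ k • (A *ᵥ v) := by
  rw [pow_succ', ← mulVec_mulVec, pow_even_mulVec_of_mulVec_mulVec_eq_smul h, mulVec_smul]

end Powers

theorem exp_mulVec_of_mulVec_mulVec_eq_neg_sq_smul {A : Matrix n n ℝ} {v : n → ℝ} {θ : ℝ}
    (hθ : θ ≠ 0) (h : A *ᵥ (A *ᵥ v) = -θ ^ 2 • v) :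
    NormedSpace.exp A *ᵥ v = cos θ • v + (sin θ / θ) • (A *ᵥ v) := by
  refine (hasSum_exp_mulVec_s6 A v).unique (HasSum.even_add_odd ?_ ?_)
  · convert (hasSum_cos θ).smul_const v using 2 with k
    rw [pow_even_mulVec_of_mulVec_mulVec_eq_smul h, smul_smul, neg_pow, pow_mul, inv_mul_eq_div]
  · convert ((hasSum_sin θ).div_const θ).smul_const (A *ᵥ v) using 2 with k
    rw [pow_odd_mulVec_of_mulVec_mulVec_eq_smul h, smul_smul, neg_pow, pow_succ θ (2 * k),
      pow_mul]
    congr 1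
    field_simp

end Matrix

theorem second_move :
    (NormedSpace.exp ((Real.pi / (2 * Real.sqrt 2)) •
        (!![0, 1, 0; -1, 0, -1; 0, 1, 0] : Matrix (Fin 3) (Fin 3) ℝ))).mulVec
      ![0, 1, 0] = ![1 / Real.sqrt 2, 0, 1 / Real.sqrt 2] := by
  set T := π / (2 * √2)
  set A : Matrix (Fin 3) (Fin 3) ℝ := !![0, 1, 0; -1, 0, -1; 0, 1, 0]
  have hAv : A *ᵥ ![0, 1, 0] = ![1, 0, 1] := by
    ext i; fin_cases i <;> simp [A]
  have hAu : A *ᵥ ![1, 0, 1] = (-2 : ℝ) • ![0, 1, 0] := by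
    ext i; fin_cases i <;> simp [A]; norm_num
  have hT : T ^ 2 * 2 = (π / 2) ^ 2 := by
    simp only [T, div_pow, mul_pow, sq_sqrt zero_le_two]; ring
  have hrot : (T • A) *ᵥ ((T • A) *ᵥ ![0, 1, 0]) = -(π / 2) ^ 2 • ![0, 1, 0] := by
    rw [smul_mulVec, smul_mulVec, hAv, mulVec_smul, hAu, smul_smul, smul_smul, ← hT]
    congr 1; ring
  rw [exp_mulVec_of_mulVec_mulVec_eq_neg_sq_smul (by positivity) hrot, cos_pi_div_two,
    sin_pi_div_two, smul_mulVec, hAv]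
  ext i; fin_cases i <;> simp [T] <;> field_simp
end

section
/- Let A = [[0,1,0],[−1,0,−1],[0,1,0]] and let T = π/√2. Then exp(T·A) applied to the vector (0, 0, 1) equals (−1, 0, 0). -/
open Matrix Real NormedSpace

/-!
Since `A ^ 3 = -2 • A`, both `exp (t • A)` and Rodrigues' expression
`1 + (sin (√2 t) / √2) • A + ((1 - cos (√2 t)) / 2) • A ^ 2` solve `g' = A g`, `g 0 = 1`, so they
agree. At `t = π / √2` this is `1 + A ^ 2`, which sends `e₃` to `e₃ + A (A e₃) = -e₁`.
-/

section Rodrigues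

variable {𝔸 : Type*} [NormedRing 𝔸] [NormedAlgebra ℝ 𝔸] [CompleteSpace 𝔸]

theorem exp_smul_mul_exp_smul_neg (a : 𝔸) (t : ℝ) : exp (t • a) * exp (t • -a) = 1 := by
  let _ : NormedAlgebra ℚ 𝔸 := NormedAlgebra.restrictScalars ℚ ℝ 𝔸
  have h : Commute (t • a) (t • -a) := ((Commute.refl a).neg_right).smul_left t |>.smul_right t
  rw [← exp_add_of_commute h, smul_neg, add_neg_cancel, NormedSpace.exp_zero]

theorem eq_exp_smul_mul_of_hasDerivAt {a : 𝔸} {g : ℝ → 𝔸}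
    (hg : ∀ t, HasDerivAt g (a * g t) t) (t : ℝ) : g t = exp (t • a) * g 0 := by
  -- `u ↦ exp (-u a) g u` has derivative `exp (-u a) (-a g u + a g u) = 0`.
  have hderiv : ∀ u, HasDerivAt (fun u : ℝ => exp (u • -a) * g u) 0 u := fun u => by
    refine ((hasDerivAt_exp_smul_const (-a) u).mul (hg u)).congr_deriv ?_
    rw [mul_neg, neg_mul, mul_assoc, neg_add_cancel]
  have hconst : exp (t • -a) * g t = g 0 := by
    simpa using is_const_of_deriv_eq_zero
      (fun u => (hderiv u).differentiableAt) (fun u => (hderiv u).deriv) t 0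
  rw [← hconst, ← mul_assoc, exp_smul_mul_exp_smul_neg, one_mul]

theorem exp_smul_eq_of_pow_three_eq {a : 𝔸} {ω : ℝ} (hω : ω ≠ 0)
    (ha : a ^ 3 = -ω ^ 2 • a) (t : ℝ) :
    exp (t • a) = 1 + (sin (ω * t) / ω) • a + ((1 - cos (ω * t)) / ω ^ 2) • a ^ 2 := by
  have hsin (s : ℝ) : HasDerivAt (fun s => sin (ω * s) / ω) (cos (ω * s)) s := by
    refine (((hasDerivAt_id' s).const_mul ω).sin.div_const ω).congr_deriv ?_
    field_simp
  have hcos (s : ℝ) : HasDerivAt (fun s => (1 - cos (ω * s)) / ω ^ 2) (sin (ω * s) / ω) s := by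
    refine ((((hasDerivAt_id' s).const_mul ω).cos.const_sub 1).div_const (ω ^ 2)).congr_deriv ?_
    field_simp
  have hcoeff (s : ℝ) : (1 - cos (ω * s)) / ω ^ 2 * -ω ^ 2 = cos (ω * s) - 1 := by
    field_simp
    ring
  have key := eq_exp_smul_mul_of_hasDerivAt (a := a)
    (g := fun s => 1 + (sin (ω * s) / ω) • a + ((1 - cos (ω * s)) / ω ^ 2) • a ^ 2) (fun s => by
      refine ((((hsin s).smul_const a).const_add 1).add
        ((hcos s).smul_const (a ^ 2))).congr_deriv ?_
      rw [mul_add, mul_add, mul_one, mul_smul_comm, mul_smul_comm, ← sq, ← pow_succ', ha,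
        smul_smul, hcoeff]
      module) t
  simpa using key.symm

end Rodrigues

theorem third_move :
    (NormedSpace.exp ((Real.pi / Real.sqrt 2) •
        (!![0, 1, 0; -1, 0, -1; 0, 1, 0] : Matrix (Fin 3) (Fin 3) ℝ))).mulVec
      ![0, 0, 1] = ![-1, 0, 0] := by
  -- `exp` on matrices needs no norm, but the calculus behind Rodrigues' formula does; the
  -- operator norm induces the same (product) topology, so `exp` is unchanged.
  let _ := Matrix.linftyOpNormedRing (n := Fin 3) (α := ℝ)
  let _ := Matrix.linftyOpNormedAlgebra (n := Fin 3) (R := ℝ) (α := ℝ)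
  set A : Matrix (Fin 3) (Fin 3) ℝ := !![0, 1, 0; -1, 0, -1; 0, 1, 0]
  have hω : √2 ≠ 0 := by positivity
  have hA : A ^ 3 = -√2 ^ 2 • A := by
    rw [sq_sqrt zero_le_two]
    ext i j
    fin_cases i <;> fin_cases j <;> norm_num [A, pow_succ, Matrix.mul_apply, Fin.sum_univ_succ]
  have hexp : exp ((π / √2) • A) = 1 + A ^ 2 := by
    refine (exp_smul_eq_of_pow_three_eq hω hA _).trans ?_
    rw [mul_div_cancel₀ _ hω, sin_pi, cos_pi, sq_sqrt zero_le_two]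
    norm_num
  rw [hexp, add_mulVec, one_mulVec, sq, ← mulVec_mulVec]
  ext i
  fin_cases i <;> simp [A, dotProduct, Fin.sum_univ_succ]
end

section
/- There exist sequences (m_k), (l_k) of nonzero vectors in ℤ² such that for all k: m_{k+1} = m_k + l_k, m_k is orthogonal to l_k, and for k ≠ k', m_k is not orthogonal to l_{k'}. -/
open Matrix

/-- `zg n` is the pair `(Re, Im)` of `(1+2i)^n`. -/
private def zg : ℕ → ℤ × ℤ
  | 0 => (1, 0)
  | n+1 => ((zg n).1 - 2*(zg n).2, (zg n).2 + 2*(zg n).1)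

private lemma zg_add (p q : ℕ) : zg (p + q) =
    ((zg p).1*(zg q).1 - (zg p).2*(zg q).2, (zg p).1*(zg q).2 + (zg p).2*(zg q).1) := by
  induction q with
  | zero => simp [zg]
  | succ n ih =>
    show zg ((p + n) + 1) = _
    rw [zg, ih, zg]
    dsimp only
    rw [Prod.mk.injEq]
    constructor <;> ring

private lemma zg_norm (k : ℕ) : (zg k).1^2 + (zg k).2^2 = 5^k := by
  induction k with
  | zero => simp [zg]
  | succ n ih =>
    rw [zg, pow_succ]
    dsimp only
    linear_combination 5 * ih

private lemma zg_mod (n : ℕ) :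
    ((zg (n+1)).1 : ZMod 5) = 2^n ∧ ((zg (n+1)).2 : ZMod 5) = 2^(n+1) := by
  induction n with
  | zero => constructor <;> simp [zg] <;> decide
  | succ n ih =>
    rw [zg]
    push_cast
    rw [ih.1, ih.2]
    constructor
    · have : (1 : ZMod 5) - 2*2 = 2 := by decide
      calc (2:ZMod 5)^n - 2*2^(n+1) = 2^n * (1 - 2*2) := by ring
        _ = 2^n * 2 := by rw [this]
        _ = 2^(n+1) := by ring
    · have : (2 : ZMod 5) + 2 = 2*2 := by decide
      calc (2:ZMod 5)^(n+1) + 2*2^n = 2^n * (2 + 2) := by ring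
        _ = 2^n * (2*2) := by rw [this]
        _ = 2^(n+2) := by ring

private lemma zg_im_ne (n : ℕ) (hn : 1 ≤ n) : (zg n).2 ≠ 0 := by
  obtain ⟨m, rfl⟩ := Nat.exists_eq_add_of_le hn
  intro h
  have h2 := (zg_mod m).2
  rw [add_comm 1 m] at h
  rw [h] at h2
  haveI : Fact (1 < 5) := ⟨by norm_num⟩
  have hu : IsUnit (2 : ZMod 5) := ⟨⟨2, 3, by decide, by decide⟩, rfl⟩
  have hpow : (2 : ZMod 5) ^ (m+1) ≠ 0 := (hu.pow (m+1)).ne_zero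
  apply hpow
  rw [← h2]
  push_cast
  ring

private lemma zg_cross (k n : ℕ) (hn : 1 ≤ n) :
    (zg k).1 * (zg (k+n)).2 - (zg k).2 * (zg (k+n)).1 = 5^k * (zg n).2 := by
  rw [zg_add]
  dsimp only
  have := zg_norm k
  linear_combination (zg n).2 * this

theorem exists_resonant_families :
    ∃ m l : ℕ → Fin 2 → ℤ,
      (∀ k, m k ≠ 0 ∧ l k ≠ 0) ∧
      (∀ k, m (k + 1) = m k + l k) ∧
      (∀ k, m k ⬝ᵥ l k = 0) ∧
      (∀ k k', k ≠ k' → m k ⬝ᵥ l k' ≠ 0) := by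
  refine ⟨fun k => ![(zg k).1, (zg k).2], fun k => ![-2*(zg k).2, 2*(zg k).1], ?_, ?_, ?_, ?_⟩
  · intro k
    have hnorm : (zg k).1^2 + (zg k).2^2 = 5^k := zg_norm k
    have h5 : (0:ℤ) < 5^k := pow_pos (by norm_num) k
    have hne : (zg k).1 ≠ 0 ∨ (zg k).2 ≠ 0 := by
      by_contra h
      push_neg at h
      rw [h.1, h.2] at hnorm
      simp at hnorm
      omega
    constructor
    · intro h
      have h0 := congrFun h 0
      have h1 := congrFun h 1
      simp at h0 h1
      tauto
    · intro h
      have h0 := congrFun h 0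
      have h1 := congrFun h 1
      simp at h0 h1
      tauto
  · intro k
    funext i
    fin_cases i <;> simp [zg] <;> ring
  · intro k
    simp [dotProduct, Fin.sum_univ_two]
    ring
  · intro k k' hkk'
    simp only [dotProduct, Fin.sum_univ_two]
    simp only [Matrix.cons_val_zero, Matrix.cons_val_one, Matrix.head_cons]
    have key : (zg k).1 * (-2*(zg k').2) + (zg k).2 * (2*(zg k').1) =
        2 * ((zg k).2 * (zg k').1 - (zg k).1 * (zg k').2) := by ring
    rw [key]
    rcases lt_or_gt_of_ne hkk' with h | h
    · obtain ⟨n, rfl⟩ := Nat.exists_eq_add_of_lt h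
      have hc := zg_cross k (n+1) (by omega)
      have hb := zg_im_ne (n+1) (by omega)
      have h5 : (0:ℤ) < 5^k := pow_pos (by norm_num) k
      rw [show k + n + 1 = k + (n+1) by ring]
      intro hz
      have : (zg k).1 * (zg (k+(n+1))).2 - (zg k).2 * (zg (k+(n+1))).1 = 0 := by linarith
      rw [hc] at this
      rcases mul_eq_zero.mp this with h' | h'
      · omega
      · exact hb h'
    · obtain ⟨n, rfl⟩ := Nat.exists_eq_add_of_lt h
      have hc := zg_cross k' (n+1) (by omega)
      have hb := zg_im_ne (n+1) (by omega)
      have h5 : (0:ℤ) < 5^k' := pow_pos (by norm_num) k'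
      rw [show k' + n + 1 = k' + (n+1) by ring]
      intro hz
      have : (zg k').1 * (zg (k'+(n+1))).2 - (zg k').2 * (zg (k'+(n+1))).1 = 0 := by linarith
      rw [hc] at this
      rcases mul_eq_zero.mp this with h' | h'
      · omega
      · exact hb h'
end
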